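/- arXiv:2205.03527 — 3 statements merged into one kernel-verified Lean document; each statement's English description precedes it below -/
import Mathlib

section
/- For every k ≥ 1, the ideal of antiderivatives of the k-th power of the maximal ideal of R is the (k+1)-st power: Δ(𝔪^k) = 𝔪^{k+1}. -/
/-!
The power `𝔪^k` is the ideal of power series of order at least `k`. Superadditivity of the order
gives one inclusion; for the other, a series of order `≥ k + 1` is `∑ⱼ Xⱼ gⱼ` with every `gⱼ` of
order `≥ k`, obtained by dividing each monomial by the smallest variable occurring in it.
In these terms `∂/∂xⱼ` lowers the order by at most one, so `𝔪^{k+1} ⊆ Δ(𝔪^k)`. Conversely the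
coefficient of `x^d` in `f` is, up to the factor `dⱼ ≠ 0` (characteristic zero), that of
`x^{d - eⱼ}` in `∂f/∂xⱼ`; so if all partials have order `≥ k` and `f(0) = 0` (from `f ∈ 𝔪^k`,
`k ≥ 1`), then `f` has order `≥ k + 1`.
-/

/-- The partial derivative `∂f/∂xⱼ` of a formal power series `f ∈ ℂ[[x₁,…,xₙ]]`,
defined coefficientwise. -/
noncomputable def pd {n : ℕ} (j : Fin n) (f : MvPowerSeries (Fin n) ℂ) :
    MvPowerSeries (Fin n) ℂ :=
  fun d => ((d j + 1 : ℕ) : ℂ) * MvPowerSeries.coeff (d + Finsupp.single j 1) f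

/-- The Tjurina ideal `T(f) = (f, ∂f/∂x₁, …, ∂f/∂xₙ)`. -/
noncomputable def Tj {n : ℕ} (f : MvPowerSeries (Fin n) ℂ) : Ideal (MvPowerSeries (Fin n) ℂ) :=
  Ideal.span ({f} ∪ Set.range fun j => pd j f)

/-- The set of antiderivatives `Δ(I) = {f : T(f) ⊆ I}`. -/
def Del {n : ℕ} (I : Ideal (MvPowerSeries (Fin n) ℂ)) : Set (MvPowerSeries (Fin n) ℂ) :=
  {f | Tj f ≤ I}

/-- The Tjurina ideal of an arbitrary set of power series (for an ideal `J`, applied to its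
carrier this computes `T(J) = T(g₁) + … + T(g_q)` for any system of generators). -/
noncomputable def Tset {n : ℕ} (A : Set (MvPowerSeries (Fin n) ℂ)) :
    Ideal (MvPowerSeries (Fin n) ℂ) :=
  Ideal.span (A ∪ {g | ∃ f ∈ A, ∃ j, g = pd j f})

/-- The maximal ideal `𝔪 = (x₁,…,xₙ)` of `ℂ[[x₁,…,xₙ]]`. -/
noncomputable def mm (n : ℕ) : Ideal (MvPowerSeries (Fin n) ℂ) :=
  Ideal.span (Set.range (MvPowerSeries.X : Fin n → MvPowerSeries (Fin n) ℂ))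

namespace MvPowerSeries

open Finsupp

variable {σ R : Type*} [CommSemiring R]

lemma coeff_X_mul [DecidableEq σ] (j : σ) (g : MvPowerSeries σ R) (d : σ →₀ ℕ) :
    coeff d (X j * g) = if single j 1 ≤ d then coeff (d - single j 1) g else 0 := by
  simp only [X_def, coeff_monomial_mul, one_mul]

lemma constantCoeff_eq_zero_of_mem_span_range_X {f : MvPowerSeries σ R}
    (hf : f ∈ Ideal.span (Set.range (X : σ → MvPowerSeries σ R))) : constantCoeff f = 0 := by
  have hX : Ideal.span (Set.range (X : σ → MvPowerSeries σ R)) ≤ RingHom.ker constantCoeff :=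
    Ideal.span_le.mpr <| by rintro _ ⟨i, rfl⟩; simp
  exact hX hf

lemma le_order_of_mem_span_range_X_pow {k : ℕ} {f : MvPowerSeries σ R}
    (hf : f ∈ Ideal.span (Set.range (X : σ → MvPowerSeries σ R)) ^ k) : (k : ℕ∞) ≤ f.order := by
  induction k generalizing f with
  | zero => simp
  | succ k ih =>
    rw [pow_succ] at hf
    refine Submodule.mul_induction_on hf (fun g hg h hh => ?_) (fun g h hg hh => ?_)
    · have h1 : 1 ≤ h.order :=
        one_le_order_iff_constCoeff_eq_zero.mpr (constantCoeff_eq_zero_of_mem_span_range_X hh)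
      calc ((k + 1 : ℕ) : ℕ∞) = k + 1 := by push_cast; rfl
        _ ≤ g.order + h.order := add_le_add (ih hg) h1
        _ ≤ (g * h).order := le_order_mul
    · exact (le_min hg hh).trans min_order_le_add

section LinearOrder

variable [LinearOrder σ]

open scoped Classical in
/-- Each monomial `X^d` of `f` is divided by the smallest variable occurring in it. -/
noncomputable def quotXFirst (f : MvPowerSeries σ R) (j : σ) : MvPowerSeries σ R :=
  fun c => if ∀ i < j, c i = 0 then coeff (c + single j 1) f else 0

open scoped Classical in
lemma coeff_quotXFirst (f : MvPowerSeries σ R) (j : σ) (c : σ →₀ ℕ) :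
    coeff c (quotXFirst f j) = if ∀ i < j, c i = 0 then coeff (c + single j 1) f else 0 :=
  rfl

lemma le_order_quotXFirst {k : ℕ} {f : MvPowerSeries σ R} (hf : ((k + 1 : ℕ) : ℕ∞) ≤ f.order)
    (j : σ) : (k : ℕ∞) ≤ (quotXFirst f j).order := by
  refine nat_le_order fun c hc => ?_
  rw [coeff_quotXFirst]
  split_ifs
  · refine coeff_of_lt_order (lt_of_lt_of_le ?_ hf)
    rw [map_add, degree_single]
    exact_mod_cast Nat.add_lt_add_right hc 1
  · rfl

lemma coeff_X_mul_quotXFirst [DecidableEq σ] (f : MvPowerSeries σ R) (j : σ) {d : σ →₀ ℕ}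
    (hd : d ≠ 0) : coeff d (X j * quotXFirst f j) =
      if j = d.support.min' (support_nonempty_iff.mpr hd) then coeff d f else 0 := by
  classical
  have hfirst : (single j 1 ≤ d ∧ ∀ i < j, (d - single j 1 : σ →₀ ℕ) i = 0) ↔
      j = d.support.min' (support_nonempty_iff.mpr hd) := by
    rw [eq_comm, Finset.min'_eq_iff, single_le_iff, Nat.one_le_iff_ne_zero, mem_support_iff]
    refine and_congr_right fun _ => forall_congr' fun i => ?_
    rcases lt_or_ge i j with hi | hi
    · simp [hi, hi.ne', not_le.mpr hi]
    · simp [hi, not_lt.mpr hi]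
  rw [coeff_X_mul, coeff_quotXFirst]
  by_cases h : single j 1 ≤ d
  · simp only [← hfirst, h, true_and, if_true, tsub_add_cancel_of_le h]
  · simp only [← hfirst, h, false_and, if_false]

lemma sum_X_mul_quotXFirst [Fintype σ] {f : MvPowerSeries σ R} (hf : constantCoeff f = 0) :
    ∑ j, X j * quotXFirst f j = f := by
  classical
  ext d
  rw [map_sum]
  rcases eq_or_ne d 0 with rfl | hd
  · simp [coeff_X_mul, hf]
  · simp [coeff_X_mul_quotXFirst _ _ hd]

end LinearOrder

theorem mem_span_range_X_pow_iff [Finite σ] {k : ℕ} {f : MvPowerSeries σ R} :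
    f ∈ Ideal.span (Set.range (X : σ → MvPowerSeries σ R)) ^ k ↔ (k : ℕ∞) ≤ f.order := by
  refine ⟨le_order_of_mem_span_range_X_pow, fun hf => ?_⟩
  have := Fintype.ofFinite σ
  -- any linear order on `σ` serves to pick the variable each monomial is charged to
  let := LinearOrder.lift' _ (Fintype.equivFin σ).injective
  induction k generalizing f with
  | zero => simp
  | succ k ih =>
    have h0 : constantCoeff f = 0 :=
      one_le_order_iff_constCoeff_eq_zero.mp (le_trans (by simp) hf)
    rw [← sum_X_mul_quotXFirst h0, pow_succ']
    exact Ideal.sum_mem _ fun j _ =>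
      Ideal.mul_mem_mul (Ideal.subset_span ⟨j, rfl⟩) (ih (le_order_quotXFirst hf j))

end MvPowerSeries

open MvPowerSeries Finsupp

lemma Tj_le_iff {n : ℕ} {f : MvPowerSeries (Fin n) ℂ} {I : Ideal (MvPowerSeries (Fin n) ℂ)} :
    Tj f ≤ I ↔ f ∈ I ∧ ∀ j, pd j f ∈ I := by
  simp [Tj, Ideal.span_le, Set.insert_subset_iff, Set.range_subset_iff]

lemma coeff_pd {n : ℕ} (j : Fin n) (f : MvPowerSeries (Fin n) ℂ) (c : Fin n →₀ ℕ) :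
    coeff c (pd j f) = ((c j + 1 : ℕ) : ℂ) * coeff (c + single j 1) f :=
  rfl

lemma le_order_pd {n k : ℕ} {f : MvPowerSeries (Fin n) ℂ} (hf : ((k + 1 : ℕ) : ℕ∞) ≤ f.order)
    (j : Fin n) : (k : ℕ∞) ≤ (pd j f).order := by
  refine nat_le_order fun c hc => ?_
  rw [coeff_pd, coeff_of_lt_order (lt_of_lt_of_le ?_ hf), mul_zero]
  rw [map_add, degree_single]
  exact_mod_cast Nat.add_lt_add_right hc 1

lemma le_order_of_le_order_pd {n k : ℕ} {f : MvPowerSeries (Fin n) ℂ} (h0 : constantCoeff f = 0)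
    (hpd : ∀ j, (k : ℕ∞) ≤ (pd j f).order) : ((k + 1 : ℕ) : ℕ∞) ≤ f.order := by
  refine nat_le_order fun d hd => ?_
  rcases eq_or_ne d 0 with rfl | hd0
  · simpa using h0
  · obtain ⟨j, hj⟩ : ∃ j, d j ≠ 0 := by simpa [Finsupp.ext_iff] using hd0
    have hle : single j 1 ≤ d := single_le_iff.mpr (Nat.one_le_iff_ne_zero.mpr hj)
    have hdeg : degree (d - single j 1) < k := by
      have := congrArg degree (tsub_add_cancel_of_le hle)
      rw [map_add, degree_single] at this
      omega
    have h := coeff_of_lt_order ((Nat.cast_lt.mpr hdeg).trans_le (hpd j))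
    rw [coeff_pd, tsub_add_cancel_of_le hle] at h
    exact (mul_eq_zero.mp h).resolve_left (Nat.cast_ne_zero.mpr (Nat.succ_ne_zero _))

/-- `Δ(𝔪^k) = 𝔪^{k+1}` for `k ≥ 1`. -/
theorem stmt_6 {n : ℕ} (k : ℕ) (hk : 1 ≤ k) :
    Del (mm n ^ k) = ↑(mm n ^ (k + 1)) := by
  ext f
  simp only [Del, Set.mem_ofPred_eq, Tj_le_iff, SetLike.mem_coe, mm, mem_span_range_X_pow_iff]
  constructor
  · rintro ⟨hf, hpd⟩
    exact le_order_of_le_order_pd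
      (one_le_order_iff_constCoeff_eq_zero.mp ((Nat.one_le_cast.mpr hk).trans hf)) hpd
  · intro hf
    exact ⟨(Nat.cast_le.mpr k.le_succ).trans hf, le_order_pd hf⟩
end

section
/- If 𝔭 ⊂ R is a prime ideal and I ⊆ R is a 𝔭-primary ideal, then the ideal of antiderivatives Δ(I) is also a 𝔭-primary ideal (in particular the radical of Δ(I) equals 𝔭). -/
open MvPowerSeries

namespace Ideal

variable {R A ι : Type*} [CommSemiring R] [CommRing A] [Algebra R A]
  (D : ι → Derivation R A A) (I : Ideal A)

def antiderivatives : Ideal A where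
  carrier := {f | f ∈ I ∧ ∀ i, D i f ∈ I}
  add_mem' ha hb := ⟨I.add_mem ha.1 hb.1, fun i => by
    rw [map_add]
    exact I.add_mem (ha.2 i) (hb.2 i)⟩
  zero_mem' := ⟨I.zero_mem, fun i => by
    rw [map_zero]
    exact I.zero_mem⟩
  smul_mem' c x hx := ⟨I.mul_mem_left c hx.1, fun i => by
    rw [smul_eq_mul, Derivation.leibniz, smul_eq_mul, smul_eq_mul]
    exact I.add_mem (I.mul_mem_left c (hx.2 i)) (I.mul_mem_right _ hx.1)⟩

theorem antiderivatives_le : antiderivatives D I ≤ I := fun _ hf => hf.1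

theorem pow_succ_mem_antiderivatives {f : A} {k : ℕ} (hf : f ^ k ∈ I) :
    f ^ (k + 1) ∈ antiderivatives D I := by
  refine ⟨by rw [pow_succ]; exact I.mul_mem_right f hf, fun i => ?_⟩
  rw [Derivation.leibniz_pow, Nat.add_sub_cancel, smul_eq_mul]
  exact nsmul_mem (I.mul_mem_right _ hf) _

theorem radical_antiderivatives : (antiderivatives D I).radical = I.radical :=
  le_antisymm (radical_mono (antiderivatives_le D I))
    fun _ ⟨k, hk⟩ => ⟨k + 1, pow_succ_mem_antiderivatives D I hk⟩

variable {I}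

theorem IsPrimary.antiderivatives (hI : I.IsPrimary) : (antiderivatives D I).IsPrimary := by
  rw [isPrimary_iff] at hI ⊢
  refine ⟨ne_top_of_le_ne_top hI.1 (antiderivatives_le D I), fun {x y} hxy => ?_⟩
  rw [radical_antiderivatives]
  refine or_iff_not_imp_right.2 fun hy => ?_
  have hx : x ∈ I := (hI.2 hxy.1).resolve_right hy
  refine ⟨hx, fun i => ?_⟩
  have hyDx : y * D i x ∈ I := by
    have hDxy := hxy.2 i
    rw [Derivation.leibniz, smul_eq_mul, smul_eq_mul] at hDxy
    exact (I.add_mem_iff_right (I.mul_mem_right _ hx)).1 hDxy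
  exact (hI.2 (mul_comm y (D i x) ▸ hyDx)).resolve_right hy

end Ideal

theorem pd_eq_pderiv {n : ℕ} (j : Fin n) (f : MvPowerSeries (Fin n) ℂ) :
    pd j f = pderiv ℂ j f := by
  ext d
  rw [coeff_pderiv, mul_comm, ← Nat.cast_succ]
  rfl

theorem Del_eq_antiderivatives_pderiv {n : ℕ} (I : Ideal (MvPowerSeries (Fin n) ℂ)) :
    Del I = Ideal.antiderivatives (fun j => pderiv ℂ j) I := by
  ext f
  simp only [Del, Tj, Set.mem_ofPred_eq, Ideal.span_le, Set.union_subset_iff,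
    Set.singleton_subset_iff, Set.range_subset_iff, SetLike.mem_coe, pd_eq_pderiv]
  rfl

theorem stmt_9_general {n : ℕ} (𝔭 I : Ideal (MvPowerSeries (Fin n) ℂ))
    (hI : I.IsPrimary) (hrad : I.radical = 𝔭) :
    ∃ D : Ideal (MvPowerSeries (Fin n) ℂ),
      (D : Set (MvPowerSeries (Fin n) ℂ)) = Del I ∧ D.IsPrimary ∧ D.radical = 𝔭 :=
  ⟨Ideal.antiderivatives (fun j => pderiv ℂ j) I, (Del_eq_antiderivatives_pderiv I).symm,
    hI.antiderivatives _, (Ideal.radical_antiderivatives _ I).trans hrad⟩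

/-- if `I` is `𝔭`-primary then `Δ(I)` is a `𝔭`-primary ideal. -/
theorem stmt_9 {n : ℕ} (𝔭 I : Ideal (MvPowerSeries (Fin n) ℂ)) (hp : 𝔭.IsPrime)
    (hI : I.IsPrimary) (hrad : I.radical = 𝔭) :
    ∃ D : Ideal (MvPowerSeries (Fin n) ℂ),
      (D : Set (MvPowerSeries (Fin n) ℂ)) = Del I ∧ D.IsPrimary ∧ D.radical = 𝔭 :=
  stmt_9_general 𝔭 I hI hrad
end

section
/- Every Tjurina ideal is T-full: if I ⊆ R is an ideal and I = T(f) for some f ∈ R, then I = T(Δ(I)). -/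
theorem Tj_le_Tset {n : ℕ} {A : Set (MvPowerSeries (Fin n) ℂ)} {f : MvPowerSeries (Fin n) ℂ}
    (hf : f ∈ A) : Tj f ≤ Tset A := by
  apply Ideal.span_mono
  rintro g (rfl | ⟨j, rfl⟩)
  · exact Or.inl hf
  · exact Or.inr ⟨f, hf, j, rfl⟩

theorem Tset_Del_le {n : ℕ} (I : Ideal (MvPowerSeries (Fin n) ℂ)) : Tset (Del I) ≤ I := by
  rw [Tset, Ideal.span_le]
  rintro g (hg | ⟨f, hf, j, rfl⟩)
  · exact hg (Ideal.subset_span (Or.inl rfl))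
  · exact hf (Ideal.subset_span (Or.inr ⟨j, rfl⟩))

theorem mem_Del_Tj {n : ℕ} (f : MvPowerSeries (Fin n) ℂ) : f ∈ Del (Tj f) :=
  Set.mem_ofPred.mpr le_rfl

/-- every Tjurina ideal is T-full. -/
theorem stmt_15 {n : ℕ} (I : Ideal (MvPowerSeries (Fin n) ℂ))
    (f : MvPowerSeries (Fin n) ℂ) (h : I = Tj f) : I = Tset (Del I) := by
  subst h
  exact le_antisymm (Tj_le_Tset (mem_Del_Tj f)) (Tset_Del_le _)
end
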